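/- arXiv:1308.2149 — 2 statements merged into one kernel-verified Lean document; each statement's English description precedes it below -/
import Mathlib

section
/- In a syntax framework with built-in quotation and built-in evaluation, the evaluation function E is not equal to the direct evaluation function E*. More precisely: suppose there are syntactic operators quote and eval such that Q(e) = quote(e) for all e ∈ L_obj and E(e) = eval(e) for all e ∈ L_syn on which E is defined, and suppose that for every expression e, eval(quote(e)) ≠ e as expressions (applying the operators produces syntactically distinct expressions). If additionally the range of Q lies in the domain of E, then E ≠ E*. -/
/-- In a syntax framework with built-in quotation and evaluation, the evaluation
function E is not the direct evaluation function E*. -/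
theorem builtin_evaluation_ne_direct_evaluation
    {L Dsem : Type*} (Lobj Lsyn : Set L) (Vsem : L → Dsem) (Vsyn : L → Dsem)
    (Q : L → L) (E Estar : L → Option L)
    (quote : L → L) (eval : L → L)
    (hVsynInj : Set.InjOn Vsyn Lobj)
    (hQmaps : ∀ e ∈ Lobj, Q e ∈ Lsyn)
    (hQuotAx : ∀ e ∈ Lobj, Vsem (Q e) = Vsyn e)
    -- built-in quotation and evaluation:
    (hQbuiltin : ∀ e ∈ Lobj, Q e = quote e)
    (hEbuiltin : ∀ e ∈ Lsyn, ∀ v, E e = some v → v = eval e)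
    -- applying eval to a quote produces a syntactically distinct expression:
    (hDistinct : ∀ e ∈ Lobj, eval (quote e) ≠ e)
    -- the range of Q lies in the domain of E:
    (hQdomE : ∀ e ∈ Lobj, ∃ v, E (Q e) = some v)
    -- the direct evaluation function:
    (hEstarVal : ∀ e ∈ Lsyn, ∀ u, Estar e = some u → u ∈ Lobj ∧ Vsyn u = Vsem e)
    (hEstarDom : ∀ e ∈ Lsyn, Vsem e ∈ Vsyn '' Lobj → ∃ u, Estar e = some u)
    (hNonempty : ∃ e, e ∈ Lobj) :
    E ≠ Estar := by
  intro hEq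
  obtain ⟨e, he⟩ := hNonempty
  obtain ⟨v, hv⟩ := hQdomE e he
  have hsyn := hQmaps e he
  have hveval := hEbuiltin _ hsyn v hv
  have hv' : Estar (Q e) = some v := hEq ▸ hv
  obtain ⟨hvobj, hVv⟩ := hEstarVal _ hsyn v hv'
  have : Vsyn v = Vsyn e := by rw [hVv, hQuotAx e he]
  have hve : v = e := hVsynInj hvobj he this
  exact hDistinct e he (by rw [← hQbuiltin e he, ← hveval, hve])
end

section
/- Undefinability of truth / liar paradox: In a syntax framework with built-in quotation quote and built-in evaluation eval over a language containing negation, if (i) the Quotation Axiom holds (V(quote(e)) = G(e) for all e where G = V_syn is total and injective), (ii) the Evaluation Axiom holds with eval total on all formulas (V(eval(A)) = V(G⁻¹(V(A))) for all A), (iii) the diagonalization property holds, i.e., there exists a formula A with V(A) = V(quote(¬ eval(A))), and (iv) V never assigns a formula and its negation the same truth value (V(¬B) ≠ V(B) for all formulas B), then we reach a contradiction. Hence E cannot be total. -/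
/-- Undefinability of truth / liar paradox: built-in quotation together with a
total built-in evaluation, diagonalization, and consistency of negation yield a
contradiction. -/
theorem liar_paradox
    {L D : Type*} (neg quote eval : L → L) (V : L → D) (G : L → D)
    (hGinj : Function.Injective G)
    (hQuotAx : ∀ e, V (quote e) = G e)
    (hEvalAx : ∀ A, ∃ B, G B = V A ∧ V (eval A) = V B)
    (hDiag : ∃ A, V A = V (quote (neg (eval A))))
    (hConsistent : ∀ B, V (neg B) ≠ V B) :
    False := by
  obtain ⟨A, hA⟩ := hDiag
  obtain ⟨B, hGB, hVB⟩ := hEvalAx A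
  have hB : B = neg (eval A) := hGinj (hGB.trans (hA.trans (hQuotAx _)))
  exact hConsistent (eval A) (hB ▸ hVB.symm)
end
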